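/- Let μ be an offspring distribution with mean at most 1, and let T_n be a μ-Galton–Watson tree conditioned on having n vertices (assuming this event has positive probability). Then the Lukasiewicz path (W_i(T_n))_{0 ≤ i ≤ n} has the same distribution as the random walk (S_i)_{0 ≤ i ≤ n} started at S_0 = 0 with increments X−1, where X ∼ μ, conditioned on the event {S_n = −1 and S_i ≥ 0 for all 0 ≤ i ≤ n−1}. -/

import Mathlib

/-- A finite plane tree: a root together with an ordered list of subtrees. -/
inductive PTree : Type where
  | node : List PTree → PTree

namespace PTree

-- Number of vertices of a plane tree.
mutual
  def size : PTree → ℕ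
    | node ts => 1 + sizeL ts
  def sizeL : List PTree → ℕ
    | [] => 0
    | t :: ts => size t + sizeL ts
end

-- The Galton–Watson weight of a tree: `Π_{u ∈ T} μ(k_u(T))`.
mutual
  def wt (μ : ℕ → ℝ) : PTree → ℝ
    | node ts => μ ts.length * wtL μ ts
  def wtL (μ : ℕ → ℝ) : List PTree → ℝ
    | [] => 1
    | t :: ts => wt μ t * wtL μ ts
end

-- The list of outdegrees of the vertices, in depth-first (lexicographical) order.
mutual
  def degList : PTree → List ℕ
    | node ts => ts.length :: degListL ts
  def degListL : List PTree → List ℕ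
    | [] => []
    | t :: ts => degList t ++ degListL ts
end

end PTree

/-- The conditioning event on the walk: the path with increments `c_i − 1` hits `−1` at
time `n` and stays nonnegative before time `n`. -/
def LukasCond (n : ℕ) (c : Fin n → ℕ) : Prop :=
  (∑ i, ((c i : ℤ) - 1)) = -1 ∧
    ∀ m < n, 0 ≤ ∑ i : Fin n, if (i : ℕ) < m then ((c i : ℤ) - 1) else 0

instance (n : ℕ) (c : Fin n → ℕ) : Decidable (LukasCond n c) := by
  unfold LukasCond; infer_instance

namespace PTree

mutual
  theorem degList_length : ∀ t : PTree, (degList t).length = t.size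
    | node ts => by rw [degList, size, List.length_cons, degListL_length]; omega
  theorem degListL_length : ∀ ts : List PTree, (degListL ts).length = sizeL ts
    | [] => rfl
    | t :: ts => by rw [degListL, sizeL, List.length_append, degList_length, degListL_length]
end

mutual
  theorem wt_eq (μ : ℕ → ℝ) : ∀ t : PTree, wt μ t = ((degList t).map μ).prod
    | node ts => by rw [wt, degList, List.map_cons, List.prod_cons, wtL_eq]
  theorem wtL_eq (μ : ℕ → ℝ) : ∀ ts : List PTree, wtL μ ts = ((degListL ts).map μ).prod
    | [] => by rw [wtL, degListL]; simp
    | t :: ts => by rw [wtL, degListL, List.map_append, List.prod_append, wt_eq, wtL_eq]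
end

end PTree

namespace PTree

/-- `F l = sum l - length l`, the terminal value of the Łukasiewicz-type path. -/
def F (l : List ℕ) : ℤ := (l.sum : ℤ) - l.length

theorem F_nil : F [] = 0 := rfl

theorem F_cons (a : ℕ) (l : List ℕ) : F (a :: l) = ((a : ℤ) - 1) + F l := by
  simp [F]; ring

theorem F_append (l₁ l₂ : List ℕ) : F (l₁ ++ l₂) = F l₁ + F l₂ := by
  simp [F]; ring

mutual
  theorem degList_F : ∀ t : PTree, F (degList t) = -1 ∧
      ∀ p, p <+: degList t → p.length < (degList t).length → 0 ≤ F p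
    | node ts => by
      obtain ⟨h1, h2⟩ := degListL_F ts
      rw [degList]
      constructor
      · rw [F_cons, h1]; ring
      · intro p hp hlen
        rcases p with _ | ⟨a, q⟩
        · simp [F_nil]
        · rw [List.cons_prefix_cons] at hp
          obtain ⟨rfl, hq⟩ := hp
          rw [F_cons]
          rcases eq_or_lt_of_le (List.IsPrefix.length_le hq) with heq | hlt
          · have : q = degListL ts := List.IsPrefix.eq_of_length hq heq
            subst this
            simp at hlen
          · have := h2 q hq hlt
            push_cast
            omega
  theorem degListL_F : ∀ ts : List PTree, F (degListL ts) = -(ts.length : ℤ) ∧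
      ∀ p, p <+: degListL ts → p.length < (degListL ts).length → -(ts.length : ℤ) < F p
    | [] => by
      constructor
      · simp [degListL, F_nil]
      · intro p hp hlen
        rw [degListL] at hlen
        simp at hlen
    | t :: ts => by
      obtain ⟨h1, h2⟩ := degList_F t
      obtain ⟨h3, h4⟩ := degListL_F ts
      rw [degListL]
      have hFA : F (degList t ++ degListL ts) = -((t :: ts).length : ℤ) := by
        rw [F_append, h1, h3]; simp only [List.length_cons]; push_cast; ring
      refine ⟨hFA, ?_⟩
      intro p hp hlen
      rcases le_or_gt p.length (degList t).length with hle | hgt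
      · have hpA : p <+: degList t :=
          List.prefix_of_prefix_length_le hp (List.prefix_append _ _) hle
        rcases eq_or_lt_of_le hle with heq | hlt
        · have hpe : p = degList t := List.IsPrefix.eq_of_length hpA heq
          subst hpe
          rw [h1]
          -- need -(k+1) < -1, i.e. ts ≠ []
          rcases ts with _ | ⟨s, ss⟩
          · rw [degListL] at hlen; simp at hlen
          · simp only [List.length_cons]; push_cast; omega
        · have := h2 p hpA hlt
          simp only [List.length_cons]
          push_cast
          omega
      · -- degList t <+: p
        have hAp : degList t <+: p :=
          List.prefix_of_prefix_length_le (List.prefix_append _ _) hp (le_of_lt hgt)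
        obtain ⟨q, rfl⟩ := hAp
        have hq : q <+: degListL ts := by
          obtain ⟨r, hr⟩ := hp
          exact ⟨r, by simpa using hr⟩
        have hqlen : q.length < (degListL ts).length := by
          simp only [List.length_append] at hlen
          omega
        have := h4 q hq hqlen
        rw [F_append, h1]
        simp only [List.length_cons]
        push_cast
        linarith
end

end PTree

namespace PTree

mutual
  theorem degList_inj : ∀ t s : PTree, degList t = degList s → t = s
    | node ts, node ss => by
      rw [degList, degList]
      intro h
      injection h with h1 h2
      rw [degListL_inj ts ss h1 h2]
  theorem degListL_inj : ∀ ts ss : List PTree, ts.length = ss.length →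
      degListL ts = degListL ss → ts = ss
    | [], [] => fun _ _ => rfl
    | [], s :: ss => by intro h _; simp at h
    | t :: ts, [] => by intro h _; simp at h
    | t :: ts, s :: ss => by
      intro hlen h
      rw [degListL, degListL] at h
      have hAt : degList t <+: degList t ++ degListL ts := List.prefix_append _ _
      have hAs : degList s <+: degList t ++ degListL ts := by
        rw [h]; exact List.prefix_append _ _
      have key : degList t = degList s := by
        rcases le_total (degList t).length (degList s).length with hle | hle
        · have hpre : degList t <+: degList s :=
            List.prefix_of_prefix_length_le hAt hAs hle
          rcases eq_or_lt_of_le hle with heq | hlt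
          · exact List.IsPrefix.eq_of_length hpre heq
          · have := (degList_F s).2 (degList t) hpre hlt
            rw [(degList_F t).1] at this
            omega
        · have hpre : degList s <+: degList t :=
            List.prefix_of_prefix_length_le hAs hAt hle
          rcases eq_or_lt_of_le hle with heq | hlt
          · exact (List.IsPrefix.eq_of_length hpre heq).symm
          · have := (degList_F t).2 (degList s) hpre hlt
            rw [(degList_F s).1] at this
            omega
      have ht : t = s := degList_inj t s key
      subst ht
      have h2 : degListL ts = degListL ss := by
        exact List.append_cancel_left h
      rw [degListL_inj ts ss (by simpa using hlen) h2]
end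

end PTree

namespace PTree

/-- First passage: if the path ends at or below `-(j+1)`, it first hits `-(j+1)` at the
end of some prefix `p`. -/
theorem first_passage : ∀ l : List ℕ, ∀ j : ℕ, F l ≤ -(j + 1 : ℤ) →
    ∃ p q, l = p ++ q ∧ F p = -(j + 1 : ℤ) ∧
      ∀ r, r <+: p → r.length < p.length → -(j + 1 : ℤ) < F r := by
  intro l
  induction l with
  | nil => intro j h; rw [F_nil] at h; omega
  | cons a l ih =>
    intro j h
    rw [F_cons] at h
    by_cases hd : a = 0 ∧ j = 0
    · obtain ⟨rfl, rfl⟩ := hd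
      refine ⟨[0], l, rfl, by simp [F_cons, F_nil], ?_⟩
      intro r hr hlen
      have : r = [] := List.length_eq_zero_iff.mp (by simpa using Nat.lt_one_iff.mp hlen)
      subst this
      rw [F_nil]; omega
    · have hja : 1 ≤ j + a := by omega
      have h' : F l ≤ -((j + a - 1 : ℕ) + 1 : ℤ) := by
        have : ((j + a - 1 : ℕ) : ℤ) = (j : ℤ) + a - 1 := by omega
        rw [this]; omega
      obtain ⟨p, q, rfl, hFp, hpre⟩ := ih (j + a - 1) h'
      have hcast : ((j + a - 1 : ℕ) : ℤ) = (j : ℤ) + a - 1 := by omega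
      refine ⟨a :: p, q, rfl, ?_, ?_⟩
      · rw [F_cons, hFp, hcast]; ring
      · intro r hr hlen
        rcases r with _ | ⟨b, r⟩
        · rw [F_nil]; omega
        · rw [List.cons_prefix_cons] at hr
          obtain ⟨rfl, hr⟩ := hr
          simp only [List.length_cons, Nat.add_lt_add_iff_right] at hlen
          have := hpre r hr hlen
          rw [hcast] at this
          rw [F_cons]
          omega

/-- Existence of a forest with a given valid code. -/
theorem exists_forest : ∀ N : ℕ, ∀ l : List ℕ, l.length ≤ N → ∀ k : ℕ,
    F l = -(k : ℤ) → (∀ p, p <+: l → p.length < l.length → -(k : ℤ) < F p) →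
    ∃ ts : List PTree, ts.length = k ∧ degListL ts = l := by
  intro N
  induction N using Nat.strong_induction_on with
  | _ N IH =>
    intro l hlN k hF hpre
    rcases k with _ | k
    · -- k = 0 : l must be []
      have : l = [] := by
        by_contra hne
        have h0 : [] <+: l := List.nil_prefix
        have := hpre [] h0 (by
          simpa using List.length_pos_iff.mpr hne)
        rw [F_nil] at this
        simp at this
      subst this
      exact ⟨[], rfl, rfl⟩
    · -- k + 1
      have hF1 : F l ≤ -(0 + 1 : ℤ) := by rw [hF]; push_cast; omega
      obtain ⟨p, q, rfl, hFp, hp⟩ := first_passage l 0 hF1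
      have hFp' : F p = -1 := by simpa using hFp
      have hp' : ∀ r, r <+: p → r.length < p.length → 0 ≤ F r := by
        intro r h1 h2; have := hp r h1 h2; simp at this; omega
      have hpne : p ≠ [] := by
        intro h; subst h; rw [F_nil] at hFp'; omega
      -- build the tree on p
      obtain ⟨a, p', rfl⟩ := List.exists_cons_of_ne_nil hpne
      have hNpos : 1 ≤ N := le_trans (by simp) hlN
      have hFp'' : F p' = -(a : ℤ) := by
        rw [F_cons] at hFp'; omega
      have hprep' : ∀ r, r <+: p' → r.length < p'.length → -(a : ℤ) < F r := by
        intro r h1 h2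
        have h3 : (a :: r) <+: (a :: p') := by
          rw [List.cons_prefix_cons]; exact ⟨rfl, h1⟩
        have := hp' (a :: r) h3 (by simpa using h2)
        rw [F_cons] at this
        omega
      have hlen1 : p'.length < N := by
        simp only [List.length_append, List.length_cons] at hlN
        omega
      obtain ⟨ts', hts'len, hts'⟩ := IH p'.length hlen1 p' le_rfl a hFp'' hprep'
      have htree : degList (node ts') = a :: p' := by
        rw [degList, hts', hts'len]
      -- build the forest on q
      have hFq : F q = -(k : ℤ) := by
        rw [F_append, hFp'] at hF
        push_cast at hF ⊢
        omega
      have hpreq : ∀ r, r <+: q → r.length < q.length → -(k : ℤ) < F r := by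
        intro r h1 h2
        have h3 : ((a :: p') ++ r) <+: ((a :: p') ++ q) := by
          exact (List.prefix_append_right_inj _).mpr h1
        have h4 : ((a :: p') ++ r).length < ((a :: p') ++ q).length := by
          simp only [List.length_append]; omega
        have := hpre _ h3 h4
        rw [F_append, hFp'] at this
        push_cast at this ⊢
        omega
      have hlen2 : q.length < N := by
        simp only [List.length_append, List.length_cons] at hlN
        omega
      obtain ⟨ts'', hts''len, hts''⟩ := IH q.length hlen2 q le_rfl k hFq hpreq
      refine ⟨node ts' :: ts'', by simp [hts''len], ?_⟩
      rw [degListL, htree, hts'']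

/-- Existence of a tree with a given valid code. -/
theorem exists_tree (l : List ℕ) (hF : F l = -1)
    (hpre : ∀ p, p <+: l → p.length < l.length → 0 ≤ F p) :
    ∃ t : PTree, degList t = l := by
  have hne : l ≠ [] := by intro h; subst h; rw [F_nil] at hF; omega
  obtain ⟨a, l', rfl⟩ := List.exists_cons_of_ne_nil hne
  have hF' : F l' = -(a : ℤ) := by rw [F_cons] at hF; omega
  have hpre' : ∀ r, r <+: l' → r.length < l'.length → -(a : ℤ) < F r := by
    intro r h1 h2
    have h3 : (a :: r) <+: (a :: l') := by
      rw [List.cons_prefix_cons]; exact ⟨rfl, h1⟩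
    have := hpre (a :: r) h3 (by simpa using h2)
    rw [F_cons] at this
    omega
  obtain ⟨ts, htslen, hts⟩ := exists_forest l'.length l' le_rfl a hF' hpre'
  exact ⟨node ts, by rw [degList, hts, htslen]⟩

end PTree


namespace PTree

lemma card_filter_lt (n m : ℕ) (h : m ≤ n) :
    (Finset.univ.filter (fun j : Fin n => (j : ℕ) < m)).card = m := by
  have h1 := List.sum_take_ofFn (fun _ : Fin n => (1 : ℕ)) m
  have h2 : (List.ofFn (fun _ : Fin n => (1 : ℕ))) = List.replicate n 1 := by
    simp [List.ofFn_const]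
  rw [h2] at h1
  rw [Finset.card_eq_sum_ones]
  rw [← h1]
  simp [List.take_replicate, List.sum_replicate]
  omega

lemma F_take_ofFn (n : ℕ) (w : Fin n → ℕ) (m : ℕ) (hm : m ≤ n) :
    F ((List.ofFn w).take m) = ∑ i : Fin n, if (i : ℕ) < m then ((w i : ℤ) - 1) else 0 := by
  rw [F, List.sum_take_ofFn, List.length_take, List.length_ofFn, min_eq_left hm,
    ← Finset.sum_filter]
  rw [Finset.sum_sub_distrib, Finset.sum_const, card_filter_lt n m hm]
  push_cast
  simp

lemma F_ofFn (n : ℕ) (w : Fin n → ℕ) :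
    F (List.ofFn w) = ∑ i : Fin n, ((w i : ℤ) - 1) := by
  have := F_take_ofFn n w n le_rfl
  rw [List.take_of_length_le (by simp)] at this
  rw [this]
  apply Finset.sum_congr rfl
  intro i _
  simp [i.isLt]

theorem lukasCond_iff_code (n : ℕ) (w : Fin n → ℕ) :
    LukasCond n w ↔ (F (List.ofFn w) = -1 ∧
      ∀ p, p <+: List.ofFn w → p.length < (List.ofFn w).length → 0 ≤ F p) := by
  constructor
  · rintro ⟨h1, h2⟩
    constructor
    · rw [F_ofFn]; exact h1
    · intro p hp hlen
      rw [List.prefix_iff_eq_take.mp hp]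
      rw [List.length_ofFn] at hlen
      rw [F_take_ofFn n w p.length (le_of_lt hlen)]
      exact h2 p.length hlen
  · rintro ⟨h1, h2⟩
    constructor
    · rw [← F_ofFn]; exact h1
    · intro m hm
      rw [← F_take_ofFn n w m (le_of_lt hm)]
      exact h2 _ (List.take_prefix _ _) (by simp; omega)

end PTree

namespace PTree

lemma degList_len_n {T : PTree} {n : ℕ} (h : T.size = n) : (degList T).length = n := by
  rw [degList_length, h]

lemma ofFn_getD (T : PTree) (n : ℕ) (h : T.size = n) :
    List.ofFn (fun j : Fin n => (degList T).getD j 0) = degList T := by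
  apply List.ext_getElem (by simp [degList_len_n h])
  intro j h1 h2
  simp only [List.getElem_ofFn]
  rw [List.getD_eq_getElem]

lemma lukas_of_tree {T : PTree} {n : ℕ} {w : Fin n → ℕ} (hs : T.size = n)
    (hd : degList T = List.ofFn w) : LukasCond n w := by
  rw [lukasCond_iff_code, ← hd]
  exact ⟨(degList_F T).1, (degList_F T).2⟩

lemma wt_eq_prod {μ : ℕ → ℝ} {T : PTree} {n : ℕ} {w : Fin n → ℕ}
    (hd : degList T = List.ofFn w) : wt μ T = ∏ i, μ (w i) := by
  rw [wt_eq, hd, List.map_ofFn, List.prod_ofFn]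
  rfl

theorem numer_eq (μ : ℕ → ℝ) (n : ℕ) (w : Fin n → ℕ) :
    (∑' T : PTree, if T.size = n ∧ T.degList = List.ofFn w then PTree.wt μ T else 0)
      = if LukasCond n w then ∏ i, μ (w i) else 0 := by
  by_cases h : LukasCond n w
  · obtain ⟨hF, hp⟩ := (lukasCond_iff_code n w).mp h
    obtain ⟨T₀, hT₀⟩ := exists_tree (List.ofFn w) hF hp
    have hsize : T₀.size = n := by rw [← degList_length, hT₀, List.length_ofFn]
    rw [tsum_eq_single T₀ ?_]
    · rw [if_pos ⟨hsize, hT₀⟩, if_pos h, wt_eq_prod hT₀]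
    · intro T hT
      rw [if_neg]
      rintro ⟨hs, hd⟩
      exact hT (degList_inj T T₀ (hd.trans hT₀.symm))
  · rw [if_neg h]
    have : ∀ T : PTree,
        (if T.size = n ∧ T.degList = List.ofFn w then PTree.wt μ T else 0) = 0 := by
      intro T
      rw [if_neg]
      rintro ⟨hs, hd⟩
      exact h (lukas_of_tree hs hd)
    simp only [this]
    exact tsum_zero

theorem denom_eq (μ : ℕ → ℝ) (n : ℕ) :
    (∑' c : Fin n → ℕ, if LukasCond n c then ∏ i, μ (c i) else 0)
      = ∑' T : PTree, if T.size = n then PTree.wt μ T else 0 := by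
  apply tsum_eq_tsum_of_ne_zero_bij
    (i := fun T => fun j : Fin n => (degList T.1).getD j 0)
  · -- injective
    rintro ⟨T₁, h₁⟩ ⟨T₂, h₂⟩ hi
    have hs₁ : T₁.size = n := by
      by_contra hc
      exact h₁ (by simp [Function.mem_support, if_neg hc] at *)
    have hs₂ : T₂.size = n := by
      by_contra hc
      exact h₂ (by simp [Function.mem_support, if_neg hc] at *)
    have : degList T₁ = degList T₂ := by
      rw [← ofFn_getD T₁ n hs₁, ← ofFn_getD T₂ n hs₂]
      exact congrArg List.ofFn hi
    exact Subtype.ext (degList_inj _ _ this)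
  · -- support ⊆ range
    intro c hc
    simp only [Function.mem_support, ne_eq, ite_eq_right_iff, not_forall] at hc
    obtain ⟨hl, hprod⟩ := hc
    obtain ⟨hF, hp⟩ := (lukasCond_iff_code n c).mp hl
    obtain ⟨T, hT⟩ := exists_tree (List.ofFn c) hF hp
    have hsize : T.size = n := by rw [← degList_length, hT, List.length_ofFn]
    have hmem : T ∈ Function.support
        (fun T : PTree => if T.size = n then PTree.wt μ T else 0) := by
      simp only [Function.mem_support, if_pos hsize]
      rw [wt_eq_prod hT]
      exact hprod
    refine ⟨⟨T, hmem⟩, ?_⟩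
    funext j
    simp only
    rw [hT]
    rw [List.getD_eq_getElem _ _ (by simp [j.isLt])]
    simp
  · -- agreement
    rintro ⟨T, hT⟩
    have hs : T.size = n := by
      by_contra hc
      exact hT (by simp [Function.mem_support, if_neg hc] at *)
    have hofn : List.ofFn (fun j : Fin n => (degList T).getD j 0) = degList T :=
      ofFn_getD T n hs
    have hlk : LukasCond n (fun j : Fin n => (degList T).getD j 0) :=
      lukas_of_tree hs hofn.symm
    simp only [if_pos hlk, if_pos hs]
    exact (wt_eq_prod hofn.symm).symm

end PTree


/-- Let `μ` be an offspring distribution with mean at most `1` and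
`T_n` a `μ`-Galton–Watson tree conditioned on having `n` vertices (an event of positive
probability). The Lukasiewicz path of `T_n`, encoded by its outdegree sequence `w` in
depth-first order, has the same law as the walk with i.i.d. increments `c − 1`, `c ∼ μ`,
conditioned on `{S_n = −1 and S_i ≥ 0 for 0 ≤ i ≤ n − 1}`: both conditional probabilities
of each outdegree sequence `w : Fin n → ℕ` agree. -/
theorem stmt_14 (μ : ℕ → ℝ) (hnonneg : ∀ i, 0 ≤ μ i)
    (hsummable : Summable μ) (htotal : ∑' i, μ i = 1)
    (hmean_summable : Summable fun i : ℕ => (i : ℝ) * μ i)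
    (hmean : ∑' i : ℕ, (i : ℝ) * μ i ≤ 1)
    (n : ℕ) (hn : 1 ≤ n)
    (hpos : 0 < ∑' T : PTree, if T.size = n then PTree.wt μ T else 0)
    (w : Fin n → ℕ) :
    (∑' T : PTree, if T.size = n ∧ T.degList = List.ofFn w then PTree.wt μ T else 0)
        / (∑' T : PTree, if T.size = n then PTree.wt μ T else 0)
      = (if LukasCond n w then ∏ i, μ (w i) else 0)
        / (∑' c : Fin n → ℕ, if LukasCond n c then ∏ i, μ (c i) else 0) := by
  rw [PTree.numer_eq, PTree.denom_eq]
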